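/- arXiv:1910.09482 — 9 statements merged into one kernel-verified Lean document; each statement's English description precedes it below -/
import Mathlib

section
/- For each n ≥ 0, sf(n) = ob(n): the number sf(n) defined by the semi-Fibonacci recurrence equals the number of partitions of n into powers of 2 in which every part occurs an odd number of times. -/
/-- The semi-Fibonacci numbers: `sf 0 = 1`, `sf n = sf (n/2)` for even `n > 0`,
and `sf n = sf (n-1) + sf (n-2)` for odd `n` (with the convention `sf (-1) = 0`,
so that `sf 1 = sf 0 = 1`). -/
def sf : ℕ → ℕ
  | 0 => 1
  | 1 => 1
  | n + 2 =>
    if (n + 2) % 2 = 0 then sf ((n + 2) / 2)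
    else sf (n + 1) + sf n
  termination_by n => n
  decreasing_by all_goals omega

/-- `ob n` is the number of partitions of `n` into powers of `2` in which
every part occurs an odd number of times. -/
noncomputable def ob (n : ℕ) : ℕ :=
  Nat.card {p : n.Partition //
    (∀ x ∈ p.parts, ∃ k : ℕ, x = 2 ^ k) ∧
    (∀ x ∈ p.parts, Odd (p.parts.count x))}

/-- The subtype counted by `ob`. -/
abbrev OB (n : ℕ) := {p : n.Partition //
    (∀ x ∈ p.parts, ∃ k : ℕ, x = 2 ^ k) ∧
    (∀ x ∈ p.parts, Odd (p.parts.count x))}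

lemma ob_def (n : ℕ) : ob n = Nat.card (OB n) := rfl

/-- For a multiset of powers of two, the sum is congruent to the count of 1 mod 2. -/
lemma sum_mod_two (s : Multiset ℕ) (hs : ∀ x ∈ s, ∃ k : ℕ, x = 2 ^ k) :
    s.sum % 2 = s.count 1 % 2 := by
  induction s using Multiset.induction_on with
  | empty => simp
  | cons a s ih =>
    have ha : ∃ k : ℕ, a = 2 ^ k := hs a (Multiset.mem_cons_self a s)
    have hrest : ∀ x ∈ s, ∃ k : ℕ, x = 2 ^ k := fun x hx => hs x (Multiset.mem_cons_of_mem hx)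
    have := ih hrest
    have hamod : a % 2 = if (1 : ℕ) = a then 1 else 0 := by
      obtain ⟨k, rfl⟩ := ha
      cases k with
      | zero => simp
      | succ k =>
        have h2 : (1 : ℕ) ≠ 2 ^ (k + 1) := by
          have := Nat.one_lt_two_pow (n := k + 1) (by omega)
          omega
        rw [if_neg h2, pow_succ, Nat.mul_mod_left]
    rw [Multiset.sum_cons, Multiset.count_cons]
    by_cases h1 : (1 : ℕ) = a
    · rw [if_pos h1] at hamod ⊢; omega
    · rw [if_neg h1] at hamod ⊢; omega

/-- If the sum is even, a partition-type multiset of powers of two contains no 1. -/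
lemma no_one_of_even (s : Multiset ℕ) (hs : ∀ x ∈ s, ∃ k : ℕ, x = 2 ^ k)
    (hodd : ∀ x ∈ s, Odd (s.count x)) (hev : s.sum % 2 = 0) : 1 ∉ s := by
  intro h1
  obtain ⟨t, ht⟩ := hodd 1 h1
  have := sum_mod_two s hs
  omega

lemma one_mem_of_odd (s : Multiset ℕ) (hs : ∀ x ∈ s, ∃ k : ℕ, x = 2 ^ k)
    (hev : s.sum % 2 = 1) : Odd (s.count 1) ∧ 1 ∈ s := by
  have := sum_mod_two s hs
  have hc : s.count 1 % 2 = 1 := by omega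
  refine ⟨Nat.odd_iff.mpr hc, ?_⟩
  rw [← Multiset.count_pos]
  omega

lemma double_sum (s : Multiset ℕ) : (s.map (fun x => 2 * x)).sum = 2 * s.sum := by
  have := Multiset.sum_map_mul_left (s := s) (a := 2) (f := id)
  simpa using this

lemma two_mul_inj : Function.Injective (fun x : ℕ => 2 * x) := fun a b h => by
  simpa using h

lemma map_half_double (s : Multiset ℕ) (hev : ∀ x ∈ s, 2 ∣ x) :
    (s.map (fun x => x / 2)).map (fun x => 2 * x) = s := by
  rw [Multiset.map_map]
  have h : Multiset.map ((fun x => 2 * x) ∘ fun x => x / 2) s = Multiset.map id s :=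
    Multiset.map_congr rfl (fun x hx => Nat.mul_div_cancel' (hev x hx))
  rw [h, Multiset.map_id]

lemma map_double_half (s : Multiset ℕ) :
    (s.map (fun x => 2 * x)).map (fun x => x / 2) = s := by
  rw [Multiset.map_map]
  have h : Multiset.map ((fun x => x / 2) ∘ fun x => 2 * x) s = Multiset.map id s :=
    Multiset.map_congr rfl (fun x _ => by
      show 2 * x / 2 = x
      omega)
  rw [h, Multiset.map_id]

lemma ob_even_dvd {n : ℕ} (hn : n % 2 = 0) (p : OB n) : ∀ x ∈ p.val.parts, 2 ∣ x := by
  have hpow := p.property.1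
  have hno1 : (1 : ℕ) ∉ p.val.parts :=
    no_one_of_even _ hpow p.property.2 (by rw [p.val.parts_sum]; omega)
  intro x hx
  obtain ⟨k, rfl⟩ := hpow x hx
  cases k with
  | zero => exact absurd hx (by simpa using hno1)
  | succ k => exact ⟨2 ^ k, by ring⟩

/-- The doubling/halving equivalence: `OB (2*m) ≃ OB m`. -/
def halveEquiv (m : ℕ) : OB (2 * m) ≃ OB m where
  toFun p :=
    ⟨⟨p.val.parts.map (fun x => x / 2), by
      intro y hy
      obtain ⟨x, hx, rfl⟩ := Multiset.mem_map.mp hy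
      have h1 := p.val.parts_pos hx
      have h2 := ob_even_dvd (by omega) p x hx
      omega, by
      have hback := map_half_double p.val.parts (ob_even_dvd (by omega) p)
      have h2 : 2 * (p.val.parts.map (fun x => x / 2)).sum = 2 * m := by
        rw [← double_sum, hback, p.val.parts_sum]
      omega⟩, by
      have hev := ob_even_dvd (n := 2 * m) (by omega) p
      have hback := map_half_double p.val.parts hev
      constructor
      · intro y hy
        obtain ⟨x, hx, rfl⟩ := Multiset.mem_map.mp hy
        obtain ⟨k, hk⟩ := p.property.1 x hx
        cases k with
        | zero =>
          exfalso
          have := hev x hx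
          omega
        | succ k => exact ⟨k, by rw [hk, pow_succ]; omega⟩
      · intro y hy
        obtain ⟨x, hx, rfl⟩ := Multiset.mem_map.mp hy
        have h2y : 2 * (x / 2) = x := Nat.mul_div_cancel' (hev x hx)
        have hc : (p.val.parts.map (fun x => x / 2)).count (x / 2)
            = p.val.parts.count x := by
          conv_rhs => rw [← hback, ← h2y,
            Multiset.count_map_eq_count' _ _ two_mul_inj]
        rw [hc]
        exact p.property.2 x hx⟩
  invFun q :=
    ⟨⟨q.val.parts.map (fun x => 2 * x), by
      intro y hy
      obtain ⟨x, hx, rfl⟩ := Multiset.mem_map.mp hy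
      have := q.val.parts_pos hx
      omega, by
      rw [double_sum, q.val.parts_sum]⟩, by
      constructor
      · intro y hy
        obtain ⟨x, hx, rfl⟩ := Multiset.mem_map.mp hy
        obtain ⟨k, rfl⟩ := q.property.1 x hx
        exact ⟨k + 1, by rw [pow_succ]; ring⟩
      · intro y hy
        obtain ⟨x, hx, rfl⟩ := Multiset.mem_map.mp hy
        rw [Multiset.count_map_eq_count' _ _ two_mul_inj]
        exact q.property.2 x hx⟩
  left_inv p := by
    apply Subtype.ext
    apply Nat.Partition.ext
    exact map_half_double p.val.parts (ob_even_dvd (by omega) p)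
  right_inv q := by
    apply Subtype.ext
    apply Nat.Partition.ext
    exact map_double_half q.val.parts

lemma ob_double (m : ℕ) : ob (2 * m) = ob m := by
  rw [ob_def, ob_def]
  exact Nat.card_congr (halveEquiv m)

def erase1 (m : ℕ) (p : OB (2 * m + 3)) (h : p.val.parts.count 1 = 1) : OB (2 * m + 2) :=
  ⟨⟨p.val.parts.erase 1, by
    intro x hx
    exact p.val.parts_pos (Multiset.mem_of_mem_erase hx), by
    have h1 : (1 : ℕ) ∈ p.val.parts := by
      rw [← Multiset.count_pos]; omega
    have hc := Multiset.cons_erase h1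
    have hs : (1 ::ₘ (p.val.parts.erase 1) : Multiset ℕ).sum = 2 * m + 3 := by
      rw [hc]; exact p.val.parts_sum
    rw [Multiset.sum_cons] at hs
    omega⟩, by
    constructor
    · intro x hx
      exact p.property.1 x (Multiset.mem_of_mem_erase hx)
    · intro x hx
      have hx1 : x ≠ 1 := by
        intro hxe
        subst hxe
        have h2 : (p.val.parts.erase 1).count 1 = p.val.parts.count 1 - 1 :=
          Multiset.count_erase_self 1 _
        have hpos : 0 < (p.val.parts.erase 1).count 1 := Multiset.count_pos.mpr hx
        omega
      rw [Multiset.count_erase_of_ne hx1]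
      exact p.property.2 x (Multiset.mem_of_mem_erase hx)⟩

def erase2 (m : ℕ) (p : OB (2 * m + 3)) (h : ¬ p.val.parts.count 1 = 1) : OB (2 * m + 1) :=
  ⟨⟨(p.val.parts.erase 1).erase 1, by
    intro x hx
    exact p.val.parts_pos (Multiset.mem_of_mem_erase (Multiset.mem_of_mem_erase hx)), by
    have hmod : p.val.parts.sum % 2 = 1 := by
      rw [p.val.parts_sum]; omega
    obtain ⟨hco, h1⟩ := one_mem_of_odd _ p.property.1 hmod
    have hc3 : p.val.parts.count 1 ≥ 3 := by
      rcases hco with ⟨t, ht⟩; omega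
    have h1' : (1 : ℕ) ∈ p.val.parts.erase 1 := by
      rw [← Multiset.count_pos, Multiset.count_erase_self]; omega
    have e1 := Multiset.cons_erase h1'
    have e2 := Multiset.cons_erase h1
    have hs : (1 ::ₘ (1 ::ₘ ((p.val.parts.erase 1).erase 1)) : Multiset ℕ).sum = 2 * m + 3 := by
      rw [e1, e2]; exact p.val.parts_sum
    simp only [Multiset.sum_cons] at hs
    omega⟩, by
    have hmod : p.val.parts.sum % 2 = 1 := by
      rw [p.val.parts_sum]; omega
    obtain ⟨hco, h1⟩ := one_mem_of_odd _ p.property.1 hmod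
    constructor
    · intro x hx
      exact p.property.1 x (Multiset.mem_of_mem_erase (Multiset.mem_of_mem_erase hx))
    · intro x hx
      by_cases hx1 : x = 1
      · subst hx1
        have e1 : ((p.val.parts.erase 1).erase 1).count 1
            = p.val.parts.count 1 - 2 := by
          rw [Multiset.count_erase_self, Multiset.count_erase_self]; omega
        rw [e1]
        rcases hco with ⟨t, ht⟩
        exact ⟨t - 1, by omega⟩
      · rw [Multiset.count_erase_of_ne hx1, Multiset.count_erase_of_ne hx1]
        exact p.property.2 x
          (Multiset.mem_of_mem_erase (Multiset.mem_of_mem_erase hx))⟩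

lemma add1_no_one (m : ℕ) (q : OB (2 * m + 2)) : (1 : ℕ) ∉ q.val.parts :=
  no_one_of_even _ q.property.1 q.property.2 (by rw [q.val.parts_sum]; omega)

lemma add2_one_mem (m : ℕ) (q : OB (2 * m + 1)) :
    Odd (q.val.parts.count 1) ∧ (1 : ℕ) ∈ q.val.parts :=
  one_mem_of_odd _ q.property.1 (by rw [q.val.parts_sum]; omega)

def add1 (m : ℕ) (q : OB (2 * m + 2)) : OB (2 * m + 3) :=
  ⟨⟨1 ::ₘ q.val.parts, by
    intro x hx
    rcases Multiset.mem_cons.mp hx with h | h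
    · omega
    · exact q.val.parts_pos h, by
    rw [Multiset.sum_cons, q.val.parts_sum]
    omega⟩, by
    have hno1 := add1_no_one m q
    constructor
    · intro x hx
      rcases Multiset.mem_cons.mp hx with h | h
      · exact ⟨0, by simp [h]⟩
      · exact q.property.1 x h
    · intro x hx
      rcases Multiset.mem_cons.mp hx with h | h
      · subst h
        rw [Multiset.count_cons_self, Multiset.count_eq_zero_of_notMem hno1]
        exact odd_one
      · have hx1 : x ≠ 1 := fun he => hno1 (he ▸ h)
        rw [Multiset.count_cons_of_ne hx1]
        exact q.property.2 x h⟩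

def add2 (m : ℕ) (q : OB (2 * m + 1)) : OB (2 * m + 3) :=
  ⟨⟨1 ::ₘ 1 ::ₘ q.val.parts, by
    intro x hx
    rcases Multiset.mem_cons.mp hx with h | h
    · omega
    rcases Multiset.mem_cons.mp h with h | h
    · omega
    · exact q.val.parts_pos h, by
    rw [Multiset.sum_cons, Multiset.sum_cons, q.val.parts_sum]
    omega⟩, by
    obtain ⟨hco, h1⟩ := add2_one_mem m q
    constructor
    · intro x hx
      rcases Multiset.mem_cons.mp hx with h | h
      · exact ⟨0, by simp [h]⟩
      rcases Multiset.mem_cons.mp h with h | h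
      · exact ⟨0, by simp [h]⟩
      · exact q.property.1 x h
    · intro x hx
      by_cases hx1 : x = 1
      · subst hx1
        rw [Multiset.count_cons_self, Multiset.count_cons_self]
        rcases hco with ⟨t, ht⟩
        exact ⟨t + 1, by omega⟩
      · rw [Multiset.count_cons_of_ne hx1, Multiset.count_cons_of_ne hx1]
        have hx' : x ∈ q.val.parts := by
          rcases Multiset.mem_cons.mp hx with h | h
          · exact absurd h hx1
          rcases Multiset.mem_cons.mp h with h | h
          · exact absurd h hx1
          · exact h
        exact q.property.2 x hx'⟩

lemma add1_parts (m : ℕ) (q : OB (2 * m + 2)) :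
    (add1 m q).val.parts = 1 ::ₘ q.val.parts := rfl

lemma add2_parts (m : ℕ) (q : OB (2 * m + 1)) :
    (add2 m q).val.parts = 1 ::ₘ 1 ::ₘ q.val.parts := rfl

lemma erase1_parts (m : ℕ) (p : OB (2 * m + 3)) (h : p.val.parts.count 1 = 1) :
    (erase1 m p h).val.parts = p.val.parts.erase 1 := rfl

lemma erase2_parts (m : ℕ) (p : OB (2 * m + 3)) (h : ¬ p.val.parts.count 1 = 1) :
    (erase2 m p h).val.parts = (p.val.parts.erase 1).erase 1 := rfl

def oddEquiv (m : ℕ) : OB (2 * m + 3) ≃ OB (2 * m + 2) ⊕ OB (2 * m + 1) where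
  toFun p :=
    if h : p.val.parts.count 1 = 1 then Sum.inl (erase1 m p h) else Sum.inr (erase2 m p h)
  invFun q := Sum.elim (add1 m) (add2 m) q
  left_inv p := by
    dsimp only
    by_cases h : p.val.parts.count 1 = 1
    · rw [dif_pos h]
      show add1 m (erase1 m p h) = p
      apply Subtype.ext
      apply Nat.Partition.ext
      rw [add1_parts, erase1_parts]
      have h1 : (1 : ℕ) ∈ p.val.parts := by rw [← Multiset.count_pos]; omega
      exact Multiset.cons_erase h1
    · rw [dif_neg h]
      show add2 m (erase2 m p h) = p
      apply Subtype.ext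
      apply Nat.Partition.ext
      rw [add2_parts, erase2_parts]
      have hmod : p.val.parts.sum % 2 = 1 := by rw [p.val.parts_sum]; omega
      obtain ⟨hco, h1⟩ := one_mem_of_odd _ p.property.1 hmod
      have hc3 : p.val.parts.count 1 ≥ 3 := by rcases hco with ⟨t, ht⟩; omega
      have h1' : (1 : ℕ) ∈ p.val.parts.erase 1 := by
        rw [← Multiset.count_pos, Multiset.count_erase_self]; omega
      rw [Multiset.cons_erase h1', Multiset.cons_erase h1]
  right_inv q := by
    rcases q with q | q
    · show (if h : (add1 m q).val.parts.count 1 = 1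
          then Sum.inl (erase1 m (add1 m q) h) else Sum.inr (erase2 m (add1 m q) h))
          = Sum.inl q
      have hcount : (add1 m q).val.parts.count 1 = 1 := by
        rw [add1_parts, Multiset.count_cons_self,
          Multiset.count_eq_zero_of_notMem (add1_no_one m q)]
      rw [dif_pos hcount]
      congr 1
      apply Subtype.ext
      apply Nat.Partition.ext
      rw [erase1_parts, add1_parts]
      exact Multiset.erase_cons_head 1 q.val.parts
    · show (if h : (add2 m q).val.parts.count 1 = 1
          then Sum.inl (erase1 m (add2 m q) h) else Sum.inr (erase2 m (add2 m q) h))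
          = Sum.inr q
      have hcount : ¬ (add2 m q).val.parts.count 1 = 1 := by
        rw [add2_parts, Multiset.count_cons_self, Multiset.count_cons_self]
        obtain ⟨hco, h1⟩ := add2_one_mem m q
        rcases hco with ⟨t, ht⟩; omega
      rw [dif_neg hcount]
      congr 1
      apply Subtype.ext
      apply Nat.Partition.ext
      rw [erase2_parts, add2_parts]
      rw [Multiset.erase_cons_head, Multiset.erase_cons_head]

lemma ob_odd (m : ℕ) : ob (2 * m + 3) = ob (2 * m + 2) + ob (2 * m + 1) := by
  rw [ob_def, ob_def, ob_def, ← Nat.card_sum]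
  exact Nat.card_congr (oddEquiv m)

lemma ob_zero : ob 0 = 1 := by
  rw [ob_def, Nat.card_eq_one_iff_unique]
  constructor
  · constructor
    intro a b
    apply Subtype.ext
    exact Subsingleton.elim _ _
  · exact ⟨⟨default, by simp, by simp⟩⟩

lemma ob_one : ob 1 = 1 := by
  rw [ob_def, Nat.card_eq_one_iff_unique]
  constructor
  · constructor
    intro a b
    apply Subtype.ext
    exact Subsingleton.elim _ _
  · refine ⟨⟨⟨{1}, by simp, by simp⟩, ?_, ?_⟩⟩
    · intro x hx
      simp at hx
      exact ⟨0, by simp [hx]⟩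
    · intro x hx
      simp at hx
      subst hx
      simp

theorem sf_eq_ob (n : ℕ) : sf n = ob n := by
  induction n using Nat.strong_induction_on with
  | _ n ih =>
    match n with
    | 0 => rw [ob_zero]; simp [sf]
    | 1 => rw [ob_one]; simp [sf]
    | (k + 2) =>
      rw [sf]
      by_cases h : (k + 2) % 2 = 0
      · rw [if_pos h]
        have hk : k + 2 = 2 * ((k + 2) / 2) := by omega
        rw [ih ((k + 2) / 2) (by omega)]
        conv_rhs => rw [hk]
        rw [ob_double]
      · rw [if_neg h]
        obtain ⟨t, ht⟩ : ∃ t, k = 2 * t + 1 := by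
          refine ⟨(k - 1) / 2, by omega⟩
        subst ht
        rw [ih (2 * t + 2) (by omega), ih (2 * t + 1) (by omega)]
        have : 2 * t + 1 + 2 = 2 * t + 3 := by omega
        rw [this, ob_odd]
end

section
/- For each n ≥ 1, sf(n) is even if 3 divides n and odd otherwise. -/
theorem sf_parity (n : ℕ) (hn : 1 ≤ n) :
    (3 ∣ n → Even (sf n)) ∧ (¬ 3 ∣ n → Odd (sf n)) := by
  induction n using Nat.strong_induction_on with
  | _ n ih =>
    match n, hn with
    | 1, _ =>
      constructor
      · intro h; omega
      · intro _; exact ⟨0, by norm_num [sf]⟩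
    | (m+2), _ =>
      rw [sf]
      by_cases hpar : (m + 2) % 2 = 0
      · rw [if_pos hpar]
        have h1 : 1 ≤ (m+2)/2 := by omega
        have h2 : (m+2)/2 < m+2 := by omega
        have := ih _ h2 h1
        have hd : 3 ∣ (m+2)/2 ↔ 3 ∣ (m+2) := by omega
        constructor
        · intro h; exact this.1 (hd.mpr h)
        · intro h; exact this.2 fun hc => h (hd.mp hc)
      · rw [if_neg hpar]
        have ha := ih (m+1) (by omega) (by omega)
        have hb : (3 ∣ m → Even (sf m)) ∧ (¬ 3 ∣ m → Odd (sf m)) := by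
          match m, hpar with
          | (k+1), _ => exact ih (k+1) (by omega) (by omega)
        constructor
        · intro h
          have h1 : ¬ 3 ∣ (m+1) := by omega
          have h2 : ¬ 3 ∣ m := by omega
          exact (ha.2 h1).add_odd (hb.2 h2)
        · intro h
          rcases (by omega : 3 ∣ (m+1) ∨ 3 ∣ m) with h1 | h1
          · have h2 : ¬ 3 ∣ m := by omega
            exact (ha.1 h1).add_odd (hb.2 h2)
          · have h2 : ¬ 3 ∣ (m+1) := by omega
            exact (ha.2 h2).add_even (hb.1 h1)
end

section
/- For all integers n ≥ 0 and m ≥ 2, sf(n,m) = nd(n,m). -/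
/-! Both sides satisfy the same recursion. In a partition counted by `nd n m` every part other
than 1 is divisible by `m`, so the number of 1s is congruent to `n` modulo `m`. If `m ∣ n` there
are therefore no 1s, and dividing every part by `m` is a bijection onto the partitions counted by
`nd (n / m) m`. Otherwise, with `r = n % m`, the number of 1s is either exactly `r`, and removing
them leaves a partition counted by `nd (n - r) m`, or at least `m`, and removing `m` of them
leaves one counted by `nd (n - m) m`. -/

/-- The semi-`m`-Fibonacci numbers: `sfm m 0 = 1`; `sfm m n = sfm m (n / m)` if
`n > 0` and `m ∣ n`; and `sfm m n = sfm m (n - r) + sfm m (n - m)` if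
`n ≡ r (mod m)` with `0 < r < m`, where terms with negative argument are `0`
(the value for `m ≤ 1` is junk). -/
def sfm (m : ℕ) : ℕ → ℕ
  | 0 => 1
  | n + 1 =>
    if m ≤ 1 then 0
    else if (n + 1) % m = 0 then sfm m ((n + 1) / m)
    else sfm m ((n + 1) - (n + 1) % m) +
      if n + 1 < m then 0 else sfm m ((n + 1) - m)
  termination_by n => n
  decreasing_by
  · exact Nat.div_lt_self (Nat.succ_pos n) (by omega)
  · omega
  · omega

/-- `nd n m` is the number of partitions of `n` into parts that are powers of
`m` in which the multiplicity of each part is not divisible by `m`. -/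
noncomputable def nd (n m : ℕ) : ℕ :=
  Nat.card {p : n.Partition //
    (∀ x ∈ p.parts, ∃ k : ℕ, x = m ^ k) ∧
    (∀ x ∈ p.parts, ¬ m ∣ p.parts.count x)}

open Multiset

section
variable {m n : ℕ}

theorem sfm_zero : sfm m 0 = 1 := by
  rw [sfm]

theorem sfm_of_dvd (hm : 2 ≤ m) (hn : 0 < n) (h : m ∣ n) : sfm m n = sfm m (n / m) := by
  obtain _ | k := n
  · omega
  rw [sfm, if_neg (by omega), if_pos (Nat.mod_eq_zero_of_dvd (by simpa using h))]

theorem sfm_of_not_dvd (hm : 2 ≤ m) (h : ¬ m ∣ n) :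
    sfm m n = sfm m (n - n % m) + if n < m then 0 else sfm m (n - m) := by
  obtain _ | k := n
  · simp at h
  rw [sfm, if_neg (by omega), if_neg (by simpa [Nat.dvd_iff_mod_eq_zero] using h)]

end

namespace Multiset

variable {α : Type*} [DecidableEq α]

theorem count_nsmul_le_sum [AddCommMonoid α] [PartialOrder α] [CanonicallyOrderedAdd α]
    (s : Multiset α) (a : α) : s.count a • a ≤ s.sum := by
  obtain ⟨u, hu⟩ := exists_add_of_le (le_count_iff_replicate_le.1 (le_refl (s.count a)))
  calc s.count a • a = (replicate (s.count a) a).sum := (sum_replicate _ _).symm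
    _ ≤ (replicate (s.count a) a + u).sum := by rw [sum_add]; exact le_self_add
    _ = s.sum := by rw [← hu]

theorem count_add_replicate_of_ne {s : Multiset α} {a b : α} {c : ℕ} (h : a ≠ b) :
    (s + replicate c b).count a = s.count a := by
  simp [count_replicate, h.symm]

theorem bijOn_add_replicate {S T : Set (Multiset α)} {b : α} {c : ℕ}
    (hST : ∀ s ∈ S, s + replicate c b ∈ T) (hTS : ∀ s, s + replicate c b ∈ T → s ∈ S)
    (hT : ∀ t ∈ T, c ≤ t.count b) : Set.BijOn (· + replicate c b) S T := by
  refine ⟨hST, (add_left_injective _).injOn, fun t ht => ?_⟩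
  have ht' : t - replicate c b + replicate c b = t :=
    tsub_add_cancel_of_le (le_count_iff_replicate_le.1 (hT t ht))
  exact ⟨t - replicate c b, hTS _ (ht'.symm ▸ ht), ht'⟩

end Multiset

theorem Nat.exists_mul_eq_pow_iff {m : ℕ} (hm : 2 ≤ m) {y : ℕ} :
    (∃ k, m * y = m ^ k) ↔ ∃ k, y = m ^ k := by
  refine ⟨fun ⟨k, hk⟩ => ?_, fun ⟨k, hk⟩ => ⟨k + 1, by rw [hk, pow_succ']⟩⟩
  obtain _ | k := k
  · have := Nat.eq_one_of_mul_eq_one_right hk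
    omega
  · exact ⟨k, Nat.eq_of_mul_eq_mul_left (by omega) (hk.trans (_root_.pow_succ' m k))⟩

theorem count_one_modEq_sum_of_forall_eq_pow {m : ℕ} {s : Multiset ℕ}
    (hs : ∀ x ∈ s, ∃ k, x = m ^ k) : s.count 1 ≡ s.sum [MOD m] := by
  have hones : (s.filter (· = 1)).sum = s.count 1 := by
    rw [filter_eq', sum_replicate, smul_eq_mul, mul_one]
  have hrest : m ∣ (s.filter (¬ · = 1)).sum := dvd_sum fun x hx => by
    obtain ⟨hx, hx1⟩ := mem_filter.1 hx
    obtain ⟨_ | k, rfl⟩ := hs x hx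
    · exact absurd (pow_zero m) hx1
    · exact dvd_pow_self m k.succ_ne_zero
  rw [← sum_filter_add_sum_filter_not (s := s) (· = 1), hones]
  simpa using (Nat.modEq_zero_iff_dvd.2 hrest).add_left (s.count 1)

def ndParts (m n : ℕ) : Set (Multiset ℕ) :=
  {s | s.sum = n ∧ (∀ x ∈ s, ∃ k, x = m ^ k) ∧ ∀ x ∈ s, ¬ m ∣ s.count x}

section
variable {m n : ℕ} {s : Multiset ℕ}

theorem bijOn_parts_ndParts (hm : 0 < m) (n : ℕ) :
    Set.BijOn Nat.Partition.parts
      {p : n.Partition | (∀ x ∈ p.parts, ∃ k, x = m ^ k) ∧ ∀ x ∈ p.parts, ¬ m ∣ p.parts.count x}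
      (ndParts m n) := by
  refine ⟨fun p hp => ⟨p.parts_sum, hp⟩, fun p _ q _ h => Nat.Partition.ext h, fun s hs => ?_⟩
  obtain ⟨hsum, hpow, hcount⟩ := hs
  have hpos : ∀ x ∈ s, 0 < x := fun x hx => by
    obtain ⟨k, rfl⟩ := hpow x hx
    exact pow_pos hm k
  exact ⟨⟨s, hpos _, hsum⟩, ⟨hpow, hcount⟩, rfl⟩

theorem nd_eq_ncard_ndParts (hm : 0 < m) (n : ℕ) : nd n m = (ndParts m n).ncard :=
  (bijOn_parts_ndParts hm n).ncard_eq

theorem ndParts_finite (hm : 0 < m) (n : ℕ) : (ndParts m n).Finite :=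
  (bijOn_parts_ndParts hm n).image_eq ▸ (Set.toFinite _).image _

theorem ndParts_zero (hm : 0 < m) : ndParts m 0 = {0} := by
  ext s
  refine ⟨fun ⟨hsum, hpow, _⟩ => eq_zero_of_forall_notMem fun x hx => ?_, ?_⟩
  · obtain ⟨k, rfl⟩ := hpow x hx
    exact (pow_pos hm k).ne' (sum_eq_zero_iff.1 hsum _ hx)
  · rintro rfl
    simp [ndParts]

theorem dvd_count_one_iff_of_mem_ndParts (hs : s ∈ ndParts m n) : m ∣ s.count 1 ↔ m ∣ n :=
  hs.1 ▸ (count_one_modEq_sum_of_forall_eq_pow hs.2.1).dvd_iff dvd_rfl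

theorem count_one_eq_mod_of_mem_ndParts (hs : s ∈ ndParts m n) (hlt : s.count 1 < m) :
    s.count 1 = n % m := by
  rw [← hs.1, ← count_one_modEq_sum_of_forall_eq_pow hs.2.1, Nat.mod_eq_of_lt hlt]

theorem one_notMem_of_mem_ndParts (hs : s ∈ ndParts m n) (hn : m ∣ n) : 1 ∉ s := fun h1 =>
  hs.2.2 1 h1 ((dvd_count_one_iff_of_mem_ndParts hs).2 hn)

theorem dvd_of_mem_ndParts (hs : s ∈ ndParts m n) (hn : m ∣ n) {x : ℕ} (hx : x ∈ s) : m ∣ x := by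
  obtain ⟨_ | k, rfl⟩ := hs.2.1 x hx
  · exact absurd hx (one_notMem_of_mem_ndParts hs hn)
  · exact dvd_pow_self m k.succ_ne_zero

theorem map_mul_mem_ndParts_iff (hm : 2 ≤ m) :
    s.map (m * ·) ∈ ndParts m (m * n) ↔ s ∈ ndParts m n := by
  have hinj : Function.Injective (m * ·) := mul_right_injective₀ (by omega)
  simp only [ndParts, Set.mem_ofPred_eq, forall_mem_map_iff, count_map_eq_count' _ _ hinj,
    Nat.exists_mul_eq_pow_iff hm]
  rw [sum_map_mul_left, map_id', Nat.mul_left_cancel_iff (by omega)]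

theorem bijOn_map_mul_ndParts (hm : 2 ≤ m) (n : ℕ) :
    Set.BijOn (map (m * ·)) (ndParts m n) (ndParts m (m * n)) := by
  refine ⟨fun s hs => (map_mul_mem_ndParts_iff hm).2 hs,
    (map_injective (mul_right_injective₀ (by omega))).injOn, fun s hs => ?_⟩
  have hs' : (s.map (· / m)).map (m * ·) = s := by
    rw [map_map]
    exact (map_congr rfl fun x hx =>
      Nat.mul_div_cancel' (dvd_of_mem_ndParts hs (dvd_mul_right m n) hx)).trans s.map_id
  exact ⟨s.map (· / m), (map_mul_mem_ndParts_iff hm).1 (hs'.symm ▸ hs), hs'⟩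

theorem mem_ndParts_of_count_eq {t : Multiset ℕ} {n' : ℕ} (hs : s ∈ ndParts m n)
    (ht : t.sum = n') (hcount : ∀ x ≠ 1, t.count x = s.count x)
    (h1 : 1 ∈ t → ¬ m ∣ t.count 1) : t ∈ ndParts m n' := by
  have hmem : ∀ x ∈ t, x ≠ 1 → x ∈ s := fun x hx hx1 => by
    rw [← count_pos, ← hcount x hx1]
    exact count_pos.2 hx
  refine ⟨ht, fun x hx => ?_, fun x hx => ?_⟩ <;> obtain rfl | hx1 := eq_or_ne x 1
  · exact ⟨0, (pow_zero m).symm⟩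
  · exact hs.2.1 x (hmem x hx hx1)
  · exact h1 hx
  · rw [hcount x hx1]
    exact hs.2.2 x (hmem x hx hx1)

theorem bijOn_add_replicate_ndParts_of_dvd (q : ℕ) {r : ℕ} (hr : 0 < r) (hrm : r < m) :
    Set.BijOn (· + replicate r 1) (ndParts m (m * q))
      (ndParts m (m * q + r) ∩ {s | s.count 1 < m}) := by
  have hmod : (m * q + r) % m = r := by rw [Nat.mul_add_mod, Nat.mod_eq_of_lt hrm]
  refine bijOn_add_replicate (fun s hs => ?_) (fun s ⟨hs, hlt⟩ => ?_) fun t ⟨ht, hlt⟩ => ?_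
  · have h1 : (s + replicate r 1).count 1 = r := by
      simp [count_eq_zero.2 (one_notMem_of_mem_ndParts hs (dvd_mul_right m q))]
    refine ⟨mem_ndParts_of_count_eq hs (by simp [hs.1]) (fun x hx => count_add_replicate_of_ne hx)
      fun _ => ?_, by simp [h1, hrm]⟩
    rw [h1]
    exact Nat.not_dvd_of_pos_of_lt hr hrm
  · have h0 : s.count 1 = 0 := by
      have := count_one_eq_mod_of_mem_ndParts hs hlt
      rw [count_add, count_replicate_self, hmod] at this
      omega
    exact mem_ndParts_of_count_eq hs (by simpa using hs.1)
      (fun x hx => (count_add_replicate_of_ne hx).symm) fun h => (count_eq_zero.1 h0 h).elim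
  · rw [count_one_eq_mod_of_mem_ndParts ht hlt, hmod]

theorem bijOn_add_replicate_ndParts_of_not_dvd (hn : ¬ m ∣ n) :
    Set.BijOn (· + replicate m 1) (ndParts m n) (ndParts m (n + m) \ {s | s.count 1 < m}) := by
  refine bijOn_add_replicate (fun s hs => ?_) (fun s ⟨hs, _⟩ => ?_) fun t ⟨_, hlt⟩ => ?_
  · refine ⟨mem_ndParts_of_count_eq hs (by simp [hs.1]) (fun x hx => count_add_replicate_of_ne hx)
      fun _ => ?_, by simp⟩
    rwa [count_add, count_replicate_self, Nat.dvd_add_self_right,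
      dvd_count_one_iff_of_mem_ndParts hs]
  · refine mem_ndParts_of_count_eq hs (by simpa using hs.1)
      (fun x hx => (count_add_replicate_of_ne hx).symm)
      fun h1 h => hs.2.2 1 (mem_add.2 (.inl h1)) ?_
    rwa [count_add, count_replicate_self, Nat.dvd_add_self_right]
  · simpa using hlt

theorem ndParts_sdiff_eq_empty (hn : n < m) : ndParts m n \ {s | s.count 1 < m} = ∅ :=
  Set.sdiff_eq_empty.2 fun s hs => by
    have := hs.1 ▸ count_nsmul_le_sum s 1
    rw [smul_eq_mul, mul_one] at this
    exact this.trans_lt hn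

theorem ncard_ndParts_of_not_dvd (hm : 2 ≤ m) (hn : ¬ m ∣ n) :
    (ndParts m n).ncard =
      (ndParts m (n - n % m)).ncard + if n < m then 0 else (ndParts m (n - m)).ncard := by
  have hr : 0 < n % m := Nat.pos_of_ne_zero (mt Nat.dvd_of_mod_eq_zero hn)
  rw [← Set.ncard_inter_add_ncard_sdiff_eq_ncard (ndParts m n) {s | s.count 1 < m}
    (ndParts_finite (by omega) n)]
  congr 1
  · rw [show n - n % m = m * (n / m) by have := Nat.div_add_mod n m; omega]
    conv_lhs => rw [← Nat.div_add_mod n m]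
    exact (bijOn_add_replicate_ndParts_of_dvd (n / m) hr (Nat.mod_lt n (by omega))).ncard_eq.symm
  · split_ifs with hlt
    · rw [ndParts_sdiff_eq_empty hlt, Set.ncard_empty]
    · obtain ⟨k, rfl⟩ := Nat.exists_eq_add_of_le (not_lt.1 hlt)
      rw [Nat.add_sub_cancel_left, add_comm m k]
      exact (bijOn_add_replicate_ndParts_of_not_dvd (by simpa using hn)).ncard_eq.symm

end

theorem sfm_eq_nd (n m : ℕ) (hm : 2 ≤ m) : sfm m n = nd n m := by
  rw [nd_eq_ncard_ndParts (by omega)]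
  induction n using Nat.strong_induction_on with
  | _ n ih =>
  rcases Nat.eq_zero_or_pos n with rfl | hn
  · rw [sfm_zero, ndParts_zero (by omega), Set.ncard_singleton]
  by_cases hdvd : m ∣ n
  · obtain ⟨q, rfl⟩ := hdvd
    have hq : q < m * q := (Nat.lt_mul_iff_one_lt_left (Nat.pos_of_mul_pos_left hn)).2 hm
    rw [sfm_of_dvd hm hn (dvd_mul_right m q), Nat.mul_div_cancel_left q (by omega), ih q hq,
      (bijOn_map_mul_ndParts hm q).ncard_eq]
  · have hr : 0 < n % m := Nat.pos_of_ne_zero (mt Nat.dvd_of_mod_eq_zero hdvd)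
    rw [sfm_of_not_dvd hm hdvd, ncard_ndParts_of_not_dvd hm hdvd, ih _ (by omega)]
    split_ifs with hlt
    · rfl
    · rw [ih _ (by omega)]
end

section
/- For all integers n ≥ 0 and m ≥ 2, the number of partitions of n whose parts have pairwise distinct max m-powers and which contain at most one part not divisible by m equals the number of partitions of n into parts that are powers of m in which the multiplicity of each part is not divisible by m. -/
/-!
Write each part as `x = m ^ s * t` with `m ∤ t`, so that `maxMPow m x = m ^ s`, and replace it by
`t` copies of `m ^ s`. When the max `m`-powers of the parts are distinct, all copies of a given
power of `m` come from a single part, so every multiplicity is some `t` and hence prime to `m`;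
merging the copies of each power back into one part inverts the construction. The condition on
the parts not divisible by `m` is automatic: they all have max `m`-power `1`.
-/

/-- The max `m`-power of `N`, i.e. `m ^ s` where `m ^ s` is the largest power
of `m` dividing `N`. -/
def maxMPow (m N : ℕ) : ℕ := m ^ Nat.maxPowDiv m N

open Multiset

namespace Nat

lemma divMaxPow_ne_zero {p n : ℕ} (hn : n ≠ 0) : n.divMaxPow p ≠ 0 := fun h =>
  hn <| by rw [← pow_padicValNat_mul_divMaxPow p n, h, mul_zero]

lemma divMaxPow_of_not_dvd {p n : ℕ} (h : ¬ p ∣ n) : n.divMaxPow p = n := by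
  rw [divMaxPow, maxPowDvdDiv_of_not_dvd h]

end Nat

lemma Multiset.dedup_bind_replicate_count {α : Type*} [DecidableEq α] (s : Multiset α) :
    s.dedup.bind (fun a => replicate (s.count a) a) = s := by
  simpa [Multiset.bind, Multiset.join, Finset.sum, Multiset.nsmul_singleton] using
    toFinset_sum_count_nsmul_eq s

lemma maxMPow_eq_pow_padicValNat (m N : ℕ) : maxMPow m N = m ^ padicValNat m N := rfl

lemma maxMPow_mul_divMaxPow (m N : ℕ) : maxMPow m N * N.divMaxPow m = N :=
  Nat.pow_padicValNat_mul_divMaxPow m N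

lemma maxMPow_of_not_dvd {m N : ℕ} (h : ¬ m ∣ N) : maxMPow m N = 1 := by
  rw [maxMPow_eq_pow_padicValNat, padicValNat.eq_zero_of_not_dvd h, pow_zero]

lemma maxMPow_pow_mul {m s t : ℕ} (hm : 1 < m) (ht : t ≠ 0) (hmt : ¬ m ∣ t) :
    maxMPow m (m ^ s * t) = m ^ s := by
  rw [maxMPow_eq_pow_padicValNat, padicValNat_base_pow_mul hm ht,
    padicValNat.eq_zero_of_not_dvd hmt, zero_add]

lemma countP_not_dvd_le_one_of_nodup_map_maxMPow {m : ℕ} {P : Multiset ℕ}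
    (hP : (P.map (maxMPow m)).Nodup) : P.countP (fun x => ¬ m ∣ x) ≤ 1 :=
  calc P.countP (fun x => ¬ m ∣ x)
      = card (P.filter fun x => ¬ m ∣ x) := countP_eq_card_filter _ _
    _ ≤ card (P.filter fun x => 1 = maxMPow m x) :=
        card_le_card (monotone_filter_right P fun _ h => (maxMPow_of_not_dvd h).symm)
    _ = (P.map (maxMPow m)).count 1 := (count_map ..).symm
    _ ≤ 1 := nodup_iff_count_le_one.mp hP 1

def splitByMaxMPow (m : ℕ) (P : Multiset ℕ) : Multiset ℕ :=
  P.bind fun x => replicate (x.divMaxPow m) (maxMPow m x)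

def mergeEqualParts (Q : Multiset ℕ) : Multiset ℕ :=
  Q.dedup.map fun v => v * Q.count v

section splitByMaxMPow

variable {m : ℕ} {P : Multiset ℕ}

lemma sum_splitByMaxMPow (m : ℕ) (P : Multiset ℕ) : (splitByMaxMPow m P).sum = P.sum := by
  simp only [splitByMaxMPow, sum_bind, sum_replicate, smul_eq_mul, mul_comm,
    maxMPow_mul_divMaxPow, map_id']

lemma mem_map_maxMPow_of_mem_splitByMaxMPow {v : ℕ} (hv : v ∈ splitByMaxMPow m P) :
    v ∈ P.map (maxMPow m) := by
  obtain ⟨x, hx, hv⟩ := mem_bind.mp hv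
  exact mem_map.mpr ⟨x, hx, (eq_of_mem_replicate hv).symm⟩

lemma pos_of_mem_splitByMaxMPow (hpos : ∀ x ∈ P, 0 < x) {v : ℕ}
    (hv : v ∈ splitByMaxMPow m P) : 0 < v := by
  obtain ⟨x, hx, rfl⟩ := mem_map.mp (mem_map_maxMPow_of_mem_splitByMaxMPow hv)
  exact Nat.pos_of_dvd_of_pos pow_padicValNat_dvd (hpos x hx)

lemma exists_eq_pow_of_mem_splitByMaxMPow {v : ℕ} (hv : v ∈ splitByMaxMPow m P) :
    ∃ k, v = m ^ k := by
  obtain ⟨x, -, rfl⟩ := mem_map.mp (mem_map_maxMPow_of_mem_splitByMaxMPow hv)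
  exact ⟨_, rfl⟩

lemma dedup_splitByMaxMPow (hpos : ∀ x ∈ P, 0 < x) (hP : (P.map (maxMPow m)).Nodup) :
    (splitByMaxMPow m P).dedup = P.map (maxMPow m) := by
  refine (Nodup.ext (nodup_dedup _) hP).mpr fun v => mem_dedup.trans
    ⟨mem_map_maxMPow_of_mem_splitByMaxMPow, fun hv => ?_⟩
  obtain ⟨x, hx, rfl⟩ := mem_map.mp hv
  exact mem_bind.mpr ⟨x, hx, mem_replicate.mpr ⟨Nat.divMaxPow_ne_zero (hpos x hx).ne', rfl⟩⟩

lemma count_splitByMaxMPow (hP : (P.map (maxMPow m)).Nodup) {x : ℕ} (hx : x ∈ P) :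
    (splitByMaxMPow m P).count (maxMPow m x) = x.divMaxPow m := by
  obtain ⟨P, rfl⟩ := exists_cons_of_mem hx
  rw [map_cons, nodup_cons] at hP
  have hnot : maxMPow m x ∉ splitByMaxMPow m P :=
    fun h => hP.1 (mem_map_maxMPow_of_mem_splitByMaxMPow h)
  rw [splitByMaxMPow, cons_bind, count_add, count_replicate_self, ← splitByMaxMPow,
    count_eq_zero_of_notMem hnot, add_zero]

lemma not_dvd_count_splitByMaxMPow (hm : 1 < m) (hpos : ∀ x ∈ P, 0 < x)
    (hP : (P.map (maxMPow m)).Nodup) {v : ℕ} (hv : v ∈ splitByMaxMPow m P) : ¬ m ∣ (splitByMaxMPow m P).count v := by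
  obtain ⟨x, hx, rfl⟩ := mem_map.mp (mem_map_maxMPow_of_mem_splitByMaxMPow hv)
  rw [count_splitByMaxMPow hP hx]
  exact Nat.not_dvd_divMaxPow hm (hpos x hx).ne'

lemma mergeEqualParts_splitByMaxMPow (hpos : ∀ x ∈ P, 0 < x) (hP : (P.map (maxMPow m)).Nodup) :
    mergeEqualParts (splitByMaxMPow m P) = P := by
  rw [mergeEqualParts, dedup_splitByMaxMPow hpos hP, map_map]
  conv_rhs => rw [← map_id P]
  refine map_congr rfl fun x hx => ?_
  simp only [Function.comp_apply, count_splitByMaxMPow hP hx, maxMPow_mul_divMaxPow, id]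

end splitByMaxMPow

section mergeEqualParts

variable {m : ℕ} {Q : Multiset ℕ}

lemma sum_mergeEqualParts (Q : Multiset ℕ) : (mergeEqualParts Q).sum = Q.sum := by
  rw [Finset.sum_multiset_count Q]
  simp [mergeEqualParts, Finset.sum, mul_comm]

lemma pos_of_mem_mergeEqualParts (hQ : ∀ v ∈ Q, 0 < v) {x : ℕ} (hx : x ∈ mergeEqualParts Q) :
    0 < x := by
  obtain ⟨v, hv, rfl⟩ := mem_map.mp hx
  have hvQ := mem_dedup.mp hv
  exact Nat.mul_pos (hQ v hvQ) (count_pos.mpr hvQ)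

variable (hm : 1 < m) (hpow : ∀ v ∈ Q, ∃ k, v = m ^ k) (hcount : ∀ v ∈ Q, ¬ m ∣ Q.count v)
include hm hpow hcount

lemma maxMPow_mul_count {v : ℕ} (hv : v ∈ Q) : maxMPow m (v * Q.count v) = v := by
  obtain ⟨k, rfl⟩ := hpow v hv
  exact maxMPow_pow_mul hm (count_ne_zero.mpr hv) (hcount _ hv)

lemma divMaxPow_mul_count {v : ℕ} (hv : v ∈ Q) : (v * Q.count v).divMaxPow m = Q.count v := by
  obtain ⟨k, rfl⟩ := hpow v hv
  rw [Nat.divMaxPow_base_pow_mul (by omega), Nat.divMaxPow_of_not_dvd (hcount _ hv)]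

lemma map_maxMPow_mergeEqualParts : (mergeEqualParts Q).map (maxMPow m) = Q.dedup := by
  rw [mergeEqualParts, map_map]
  conv_rhs => rw [← map_id Q.dedup]
  exact map_congr rfl fun v hv => maxMPow_mul_count hm hpow hcount (mem_dedup.mp hv)

lemma splitByMaxMPow_mergeEqualParts : splitByMaxMPow m (mergeEqualParts Q) = Q := by
  rw [mergeEqualParts, splitByMaxMPow, bind_map]
  conv_rhs => rw [← Q.dedup_bind_replicate_count]
  refine bind_congr fun v hv => ?_
  rw [maxMPow_mul_count hm hpow hcount (mem_dedup.mp hv),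
    divMaxPow_mul_count hm hpow hcount (mem_dedup.mp hv)]

end mergeEqualParts

def distinctMaxMPowEquivPowers (n : ℕ) {m : ℕ} (hm : 1 < m) :
    {p : n.Partition // (p.parts.map (maxMPow m)).Nodup} ≃
    {p : n.Partition //
      (∀ x ∈ p.parts, ∃ k : ℕ, x = m ^ k) ∧ ∀ x ∈ p.parts, ¬ m ∣ p.parts.count x} where
  toFun p :=
    ⟨⟨splitByMaxMPow m p.1.parts, pos_of_mem_splitByMaxMPow (fun _ => p.1.parts_pos),
      by rw [sum_splitByMaxMPow, p.1.parts_sum]⟩,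
      fun _ => exists_eq_pow_of_mem_splitByMaxMPow,
      fun _ => not_dvd_count_splitByMaxMPow hm (fun _ => p.1.parts_pos) p.2⟩
  invFun q :=
    ⟨⟨mergeEqualParts q.1.parts, pos_of_mem_mergeEqualParts (fun _ => q.1.parts_pos),
      by rw [sum_mergeEqualParts, q.1.parts_sum]⟩,
      by rw [map_maxMPow_mergeEqualParts hm q.2.1 q.2.2]; exact nodup_dedup _⟩
  left_inv p := Subtype.ext <| Nat.Partition.ext <|
    mergeEqualParts_splitByMaxMPow (fun _ => p.1.parts_pos) p.2
  right_inv q := Subtype.ext <| Nat.Partition.ext <| splitByMaxMPow_mergeEqualParts hm q.2.1 q.2.2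

theorem card_distinct_maxMPow_eq_card_powers (n m : ℕ) (hm : 2 ≤ m) :
    Nat.card {p : n.Partition //
      (p.parts.map fun x => maxMPow m x).Nodup ∧
      p.parts.countP (fun x => ¬ m ∣ x) ≤ 1} =
    Nat.card {p : n.Partition //
      (∀ x ∈ p.parts, ∃ k : ℕ, x = m ^ k) ∧
      (∀ x ∈ p.parts, ¬ m ∣ p.parts.count x)} := by
  rw [← Nat.card_congr (distinctMaxMPowEquivPowers n hm)]
  exact Nat.card_congr <| Equiv.subtypeEquivRight fun p =>
    and_iff_left_of_imp countP_not_dvd_le_one_of_nodup_map_maxMPow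
end

section
/- Let m ≥ 2 and n ≥ 0. For every r with 1 ≤ r ≤ m−1, sf(nm + r, m) = Σ_{j=0}^{n} sf(j,m); in particular sf(nm+1, m) = sf(nm+2, m) = ⋯ = sf(nm+m−1, m). -/
lemma sfm_succ (m k : ℕ) : sfm m (k+1) =
    if m ≤ 1 then 0
    else if (k + 1) % m = 0 then sfm m ((k + 1) / m)
    else sfm m ((k + 1) - (k + 1) % m) +
      if k + 1 < m then 0 else sfm m ((k + 1) - m) := by
  rw [sfm]

theorem sfm_mul_add_r (m n : ℕ) (hm : 2 ≤ m) :
    ∀ r : ℕ, 1 ≤ r → r ≤ m - 1 →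
      sfm m (n * m + r) = ∑ j ∈ Finset.range (n + 1), sfm m j := by
  induction n with
  | zero =>
    intro r h1 h2
    have hr : r % m = r := Nat.mod_eq_of_lt (by omega)
    obtain ⟨k, rfl⟩ : ∃ k, r = k + 1 := ⟨r - 1, by omega⟩
    rw [zero_mul, zero_add, sfm_succ]
    simp only [hr]
    rw [if_neg (by omega), if_neg (by omega), if_pos (by omega)]
    simp [sfm]
  | succ n ih =>
    intro r h1 h2
    have hmm : (n+1) * m = n * m + m := by ring
    have hv : (n+1) * m + r = (n * m + m + r - 1) + 1 := by omega
    have hmod : ((n+1) * m + r) % m = r := by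
      rw [mul_comm, Nat.mul_add_mod, Nat.mod_eq_of_lt (by omega)]
    rw [hv, sfm_succ, ← hv]
    simp only [hmod]
    rw [if_neg (by omega), if_neg (by omega), if_neg (by omega)]
    have h3 : (n+1) * m + r - r = (n+1) * m := by omega
    have h4 : (n+1) * m + r - m = n * m + r := by omega
    rw [h3, h4, ih r h1 h2]
    have h5 : sfm m ((n+1) * m) = sfm m (n+1) := by
      obtain ⟨k, hk⟩ : ∃ k, (n+1) * m = k + 1 := ⟨(n+1)*m - 1, by omega⟩
      rw [hk, sfm_succ, ← hk]
      rw [if_neg (by omega), if_pos (Nat.mul_mod_left _ _),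
        Nat.mul_div_cancel _ (by omega)]
    rw [h5, Finset.sum_range_succ _ (n+1)]
    ring
end

section
/- Let m ≥ 2. For every j ≥ 0, every v with 0 ≤ v ≤ m, and every r with 1 ≤ r ≤ m−1, sf(m^j (mv + r), m) = v + 1. -/
theorem sfm_of_pos {m n : ℕ} (hn : 0 < n) : sfm m n =
    if m ≤ 1 then 0
    else if n % m = 0 then sfm m (n / m)
    else sfm m (n - n % m) + if n < m then 0 else sfm m (n - m) := by
  obtain ⟨k, rfl⟩ := Nat.exists_eq_add_one_of_ne_zero hn.ne'
  rw [sfm]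

section

variable {m : ℕ} (hm : 2 ≤ m)
include hm

theorem sfm_mul_self (n : ℕ) : sfm m (m * n) = sfm m n := by
  rcases Nat.eq_zero_or_pos n with rfl | hn
  · rw [mul_zero]
  · rw [sfm_of_pos (by positivity), if_neg (by omega), if_pos (Nat.mul_mod_right m n),
      Nat.mul_div_cancel_left _ (by omega)]

theorem sfm_pow_mul_self (j n : ℕ) : sfm m (m ^ j * n) = sfm m n := by
  induction j with
  | zero => rw [pow_zero, one_mul]
  | succ j ih => rw [pow_succ', mul_assoc, sfm_mul_self hm, ih]

theorem sfm_of_mod_ne_zero {n : ℕ} (h : n % m ≠ 0) :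
    sfm m n = sfm m (n - n % m) + if n < m then 0 else sfm m (n - m) := by
  rw [sfm_of_pos (Nat.pos_of_ne_zero fun hn => h (by rw [hn, Nat.zero_mod])),
    if_neg (by omega), if_neg h]

theorem sfm_eq_one_of_lt {n : ℕ} (hn : n < m) : sfm m n = 1 := by
  rcases Nat.eq_zero_or_pos n with rfl | hn0
  · rw [sfm]
  · rw [sfm_of_mod_ne_zero hm (by rw [Nat.mod_eq_of_lt hn]; omega), Nat.mod_eq_of_lt hn,
      if_pos hn, Nat.sub_self, sfm]

theorem sfm_eq_one_of_le {n : ℕ} (hn : n ≤ m) : sfm m n = 1 := by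
  rcases hn.lt_or_eq with hn | rfl
  · exact sfm_eq_one_of_lt hm hn
  · simpa using (sfm_mul_self hm 1).trans (sfm_eq_one_of_lt hm (by omega))

theorem sfm_mul_add_succ {v r : ℕ} (hr : 0 < r) (hrm : r < m) :
    sfm m (m * (v + 1) + r) = sfm m (v + 1) + sfm m (m * v + r) := by
  have hmod : (m * (v + 1) + r) % m = r := by rw [Nat.mul_add_mod, Nat.mod_eq_of_lt hrm]
  rw [sfm_of_mod_ne_zero hm (by omega), hmod, if_neg (by nlinarith), Nat.add_sub_cancel,
    sfm_mul_self hm, show m * (v + 1) + r - m = m * v + r by rw [mul_add_one]; omega]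

theorem sfm_mul_add_eq_sum {r : ℕ} (hr : 0 < r) (hrm : r < m) (v : ℕ) :
    sfm m (m * v + r) = ∑ i ∈ Finset.range (v + 1), sfm m i := by
  induction v with
  | zero => rw [mul_zero, zero_add, sfm_eq_one_of_lt hm hrm, Finset.sum_range_one, sfm]
  | succ v ih => rw [sfm_mul_add_succ hm hr hrm, ih, Finset.sum_range_succ _ (v + 1), add_comm]

end

theorem sfm_pow_mul (m : ℕ) (hm : 2 ≤ m) :
    ∀ j v r : ℕ, v ≤ m → 1 ≤ r → r ≤ m - 1 →
      sfm m (m ^ j * (m * v + r)) = v + 1 := by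
  intro j v r hv hr hrm
  rw [sfm_pow_mul_self hm, sfm_mul_add_eq_sum hm hr (by omega),
    Finset.sum_congr rfl fun i hi => sfm_eq_one_of_le hm
      (by rw [Finset.mem_range] at hi; omega)]
  simp
end

section
/- For every integer j ≥ 0, Σ_{r=0}^{2j+1} sf(r,3) ≡ 0 (mod 2). -/
lemma sfm0 : sfm 3 0 = 1 := by simp [sfm]
lemma sfm1 : sfm 3 1 = 1 := by simp [sfm]
lemma sfm2 : sfm 3 2 = 1 := by simp [sfm]
lemma sfm3 : sfm 3 3 = 1 := by simp [sfm]
lemma sfm4 : sfm 3 4 = 2 := by simp [sfm]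
lemma sfm5 : sfm 3 5 = 2 := by simp [sfm]

lemma L0 (n : ℕ) (h : n % 3 = 0) (h2 : 0 < n) : sfm 3 n = sfm 3 (n / 3) := by
  obtain ⟨m, rfl⟩ : ∃ m, n = m + 1 := ⟨n - 1, by omega⟩
  rw [sfm]; simp [h]

lemma L12 (n : ℕ) (h : n % 3 ≠ 0) (h3 : 3 ≤ n) :
    sfm 3 n = sfm 3 (n - n % 3) + sfm 3 (n - 3) := by
  obtain ⟨m, rfl⟩ : ∃ m, n = m + 1 := ⟨n - 1, by omega⟩
  rw [sfm]; simp [h]; omega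

lemma L12' (n a b : ℕ) (h : n % 3 ≠ 0) (h3 : 3 ≤ n) (ha : a = n - n % 3)
    (hb : b = n - 3) : sfm 3 n = sfm 3 a + sfm 3 b := by
  rw [ha, hb]; exact L12 n h h3

lemma L0' (n a : ℕ) (h : n % 3 = 0) (h2 : 0 < n) (ha : a = n / 3) :
    sfm 3 n = sfm 3 a := by
  rw [ha]; exact L0 n h h2

lemma key : ∀ n : ℕ, sfm 3 (2 * n + 1) % 2 = sfm 3 (2 * n) % 2 ∧
    sfm 3 (6 * n + 4) % 2 = 0 ∧ sfm 3 (6 * n + 5) % 2 = 0 := by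
  intro n
  induction n using Nat.strong_induction_on with
  | _ n ih =>
  have hA : sfm 3 (2 * n + 1) % 2 = sfm 3 (2 * n) % 2 := by
    rcases Nat.lt_or_ge n 3 with hn | hn
    · interval_cases n
      · rw [show 2*0+1 = 1 by rfl, show 2*0 = 0 by rfl, sfm1, sfm0]
      · rw [show 2*1+1 = 3 by rfl, show 2*1 = 2 by rfl, sfm3, sfm2]
      · rw [show 2*2+1 = 5 by rfl, show 2*2 = 4 by rfl, sfm5, sfm4]
    · have h3 : n % 3 = 0 ∨ n % 3 = 1 ∨ n % 3 = 2 := by omega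
      set t := n / 3 with ht
      have htn : n = 3 * t + n % 3 := by omega
      have ht1 : 1 ≤ t := by omega
      rcases h3 with h | h | h
      · have e1 := L12' (2 * n + 1) (2 * n) (6 * (t - 1) + 4) (by omega) (by omega)
          (by omega) (by omega)
        have hB := (ih (t - 1) (by omega)).2.1
        omega
      · have e1 := L0' (2 * n + 1) (2 * t + 1) (by omega) (by omega) (by omega)
        have e2 := L12' (2 * n) (6 * t) (6 * (t - 1) + 5) (by omega) (by omega)
          (by omega) (by omega)
        have e3 := L0' (6 * t) (2 * t) (by omega) (by omega) (by omega)
        have hAt := (ih t (by omega)).1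
        have hC := (ih (t - 1) (by omega)).2.2
        omega
      · have e1 := L12' (2 * n) (6 * t + 3) (6 * t + 1) (by omega) (by omega)
          (by omega) (by omega)
        have e2 := L12' (2 * n + 1) (6 * t + 3) (6 * t + 2) (by omega) (by omega)
          (by omega) (by omega)
        have e3 := L12' (6 * t + 1) (6 * t) (6 * (t - 1) + 4) (by omega) (by omega)
          (by omega) (by omega)
        have e4 := L12' (6 * t + 2) (6 * t) (6 * (t - 1) + 5) (by omega) (by omega)
          (by omega) (by omega)
        have hB := (ih (t - 1) (by omega)).2.1
        have hC := (ih (t - 1) (by omega)).2.2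
        omega
  refine ⟨hA, ?_, ?_⟩
  · have e1 := L12' (6 * n + 4) (6 * n + 3) (6 * n + 1) (by omega) (by omega)
      (by omega) (by omega)
    have e2 := L0' (6 * n + 3) (2 * n + 1) (by omega) (by omega) (by omega)
    rcases Nat.eq_zero_or_pos n with rfl | hn
    · have h1 := sfm1; have h3 := sfm3
      simp only [Nat.mul_zero, Nat.zero_add] at e1 e2 ⊢
      omega
    · have e3 := L12' (6 * n + 1) (6 * n) (6 * (n - 1) + 4) (by omega) (by omega)
        (by omega) (by omega)
      have e4 := L0' (6 * n) (2 * n) (by omega) (by omega) (by omega)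
      have hB := (ih (n - 1) (by omega)).2.1
      omega
  · have e1 := L12' (6 * n + 5) (6 * n + 3) (6 * n + 2) (by omega) (by omega)
      (by omega) (by omega)
    have e2 := L0' (6 * n + 3) (2 * n + 1) (by omega) (by omega) (by omega)
    rcases Nat.eq_zero_or_pos n with rfl | hn
    · have h2 := sfm2; have h3 := sfm3
      simp only [Nat.mul_zero, Nat.zero_add] at e1 e2 ⊢
      omega
    · have e3 := L12' (6 * n + 2) (6 * n) (6 * (n - 1) + 5) (by omega) (by omega)
        (by omega) (by omega)
      have e4 := L0' (6 * n) (2 * n) (by omega) (by omega) (by omega)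
      have hC := (ih (n - 1) (by omega)).2.2
      omega

theorem sfm_three_sum_even (j : ℕ) :
    (∑ r ∈ Finset.range (2 * j + 2), sfm 3 r) % 2 = 0 := by
  induction j with
  | zero => simp [Finset.sum_range_succ, sfm0, sfm1]
  | succ j ih =>
    have hk := (key (j + 1)).1
    rw [show 2 * (j + 1) + 2 = (2 * j + 2) + 1 + 1 by ring, Finset.sum_range_succ,
      Finset.sum_range_succ]
    rw [show 2 * (j + 1) + 1 = 2 * j + 3 by ring, show 2 * (j + 1) = 2 * j + 2 by ring] at hk
    omega
end

section
/- Let m ≥ 2 and 1 ≤ r ≤ m−1, and let k be a positive integer with k ≡ m + r (mod 2m) and k ≤ m² + r. Then for every integer i ≥ 0, sf(m^i · k, m) is even. -/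
lemma sfm_eq (m n : ℕ) (hn : 0 < n) :
    sfm m n = if m ≤ 1 then 0
      else if n % m = 0 then sfm m (n / m)
      else sfm m (n - n % m) + if n < m then 0 else sfm m (n - m) := by
  obtain ⟨p, rfl⟩ := Nat.exists_eq_succ_of_ne_zero hn.ne'
  rw [sfm]

lemma sfm_small (m : ℕ) (hm : 2 ≤ m) : ∀ s, 1 ≤ s → s ≤ m → sfm m s = 1 := by
  intro s hs1 hs2
  rcases lt_or_eq_of_le hs2 with h | h
  · rw [sfm_eq m s (by omega)]
    have hmod : s % m = s := Nat.mod_eq_of_lt h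
    simp only [hmod, if_neg (by omega : ¬ m ≤ 1), if_neg (by omega : ¬ s = 0),
      if_pos h, Nat.sub_self]
    simp [sfm]
  · rw [h, sfm_eq m m (by omega), if_neg (by omega : ¬ m ≤ 1), Nat.mod_self, if_pos rfl,
      Nat.div_self (by omega : 0 < m)]
    have h1 : 1 % m = 1 := Nat.mod_eq_of_lt (by omega)
    rw [sfm_eq m 1 (by omega), if_neg (by omega : ¬ m ≤ 1), h1,
      if_neg (by omega : ¬ (1:ℕ) = 0), if_pos (by omega : 1 < m)]
    simp [sfm]

lemma sfm_lin (m r : ℕ) (hm : 2 ≤ m) (hr1 : 1 ≤ r) (hr2 : r ≤ m - 1) :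
    ∀ t, t ≤ m → sfm m (m * t + r) = t + 1 := by
  intro t
  induction t with
  | zero =>
    intro _
    simpa using sfm_small m hm r hr1 (by omega)
  | succ t ih =>
    intro ht
    have hrm : r < m := by omega
    have hpos : 0 < m * (t + 1) + r := by positivity
    have hmod : (m * (t + 1) + r) % m = r := by
      simp [Nat.mul_add_mod, Nat.mod_eq_of_lt hrm]
    have hge : ¬ (m * (t + 1) + r < m) := by nlinarith
    rw [sfm_eq m _ hpos]
    simp only [hmod, if_neg (by omega : ¬ m ≤ 1), if_neg (by omega : ¬ r = 0), if_neg hge]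
    have h1 : m * (t + 1) + r - r = m * (t + 1) := by omega
    have h2 : m * (t + 1) + r - m = m * t + r := by ring_nf; omega
    rw [h1, h2, ih (by omega)]
    have h3 : sfm m (m * (t + 1)) = 1 := by
      rw [sfm_eq m _ (by positivity)]
      simp only [Nat.mul_mod_right, if_neg (by omega : ¬ m ≤ 1), if_pos rfl,
        Nat.mul_div_cancel_left _ (by omega : 0 < m)]
      exact sfm_small m hm (t + 1) (by omega) (by omega)
    omega

theorem sfm_even_of_cong (m r k : ℕ) (hm : 2 ≤ m) (hr1 : 1 ≤ r)
    (hr2 : r ≤ m - 1) (hk0 : 0 < k) (hk1 : k % (2 * m) = (m + r) % (2 * m))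
    (hk2 : k ≤ m ^ 2 + r) :
    ∀ i : ℕ, Even (sfm m (m ^ i * k)) := by
  -- extract k = m * (2j+1) + r
  have hmr : (m + r) % (2 * m) = m + r := Nat.mod_eq_of_lt (by omega)
  have h1 := Nat.div_add_mod k (2 * m)
  rw [hk1, hmr] at h1
  obtain ⟨j, hk⟩ : ∃ j, k = 2 * m * j + (m + r) := ⟨k / (2 * m), h1.symm⟩
  have hmm : m * (2 * j + 1) ≤ m * m := by
    have hsq : m ^ 2 = m * m := sq m
    nlinarith
  have hjm : 2 * j + 1 ≤ m := Nat.le_of_mul_le_mul_left hmm (by omega)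
  have base : Even (sfm m k) := by
    have : k = m * (2 * j + 1) + r := by rw [hk]; ring
    rw [this, sfm_lin m r hm hr1 hr2 (2 * j + 1) hjm]
    exact ⟨j + 1, by ring⟩
  intro i
  induction i with
  | zero => simpa using base
  | succ i ih =>
    have hpos : 0 < m ^ (i + 1) * k := by positivity
    rw [sfm_eq m _ hpos]
    have hmod : (m ^ (i + 1) * k) % m = 0 := by
      have : m ∣ m ^ (i + 1) * k := Dvd.dvd.mul_right (dvd_pow_self m (by omega)) k
      omega
    have hdiv : (m ^ (i + 1) * k) / m = m ^ i * k := by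
      rw [pow_succ, mul_comm (m ^ i) m, mul_assoc]
      exact Nat.mul_div_cancel_left _ (by omega)
    simp only [hmod, if_neg (by omega : ¬ m ≤ 1), if_pos rfl, hdiv]
    exact ih
end

section
/- As formal power series over ℤ/2ℤ, Σ_{n≥0} (Σ_{r=0}^{n} sf(r,3)) q^n = Π_{n≥0} (1 + q^{2·3^n}). Equivalently, Σ_{r=0}^{n} sf(r,3) is odd if and only if n is a sum of distinct integers of the form 2·3^k. -/
namespace Finset

theorem sum_eq_ite_zero_add_sum_preimage_succ {M : Type*} [AddCommMonoid M] (S : Finset ℕ)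
    (f : ℕ → M) :
    ∑ k ∈ S, f k = (if 0 ∈ S then f 0 else 0) +
      ∑ k ∈ S.preimage (· + 1) (add_left_injective 1).injOn, f (k + 1) := by
  classical
  have hrange (k : ℕ) : k ∈ Set.range (· + 1) ↔ k ≠ 0 := by
    simp [Nat.pos_iff_ne_zero]
  rw [sum_preimage' (· + 1) S, filter_congr fun k _ => hrange k, filter_ne']
  split_ifs with h0
  · exact (add_sum_erase S f h0).symm
  · rw [erase_eq_of_notMem h0, zero_add]

theorem sum_map_succ_mul_pow {R : Type*} [CommSemiring R] (b c : R) (S : Finset ℕ) :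
    ∑ k ∈ S.map (addRightEmbedding 1), c * b ^ k = b * ∑ k ∈ S, c * b ^ k := by
  simp only [sum_map, addRightEmbedding_apply, mul_sum, pow_succ]
  exact sum_congr rfl fun _ _ => by ring

end Finset

def IsSumOfDistinctMulPow (b c n : ℕ) : Prop :=
  ∃ S : Finset ℕ, n = ∑ k ∈ S, c * b ^ k

namespace IsSumOfDistinctMulPow

variable {b c : ℕ}

theorem zero : IsSumOfDistinctMulPow b c 0 := ⟨∅, rfl⟩

theorem mul_add_iff (hcb : c < b) {r : ℕ} (hr : r < b) (a : ℕ) :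
    IsSumOfDistinctMulPow b c (b * a + r) ↔
      (r = 0 ∨ r = c) ∧ IsSumOfDistinctMulPow b c a := by
  have hb : 0 < b := by omega
  constructor
  · rintro ⟨S, hS⟩
    set T := S.preimage (· + 1) (add_left_injective 1).injOn
    set e := if 0 ∈ S then c else 0
    have hsplit : b * a + r = b * (∑ k ∈ T, c * b ^ k) + e := by
      rw [hS, Finset.sum_eq_ite_zero_add_sum_preimage_succ, add_comm, Finset.mul_sum]
      simp only [pow_succ, pow_zero, mul_one, e]
      congr 1
      exact Finset.sum_congr rfl fun _ _ => by ring
    have he_cases : e = 0 ∨ e = c := by simp only [e]; split_ifs <;> simp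
    have he : e < b := by omega
    have hmod := congrArg (· % b) hsplit
    have hdiv := congrArg (· / b) hsplit
    simp only [Nat.mul_add_mod, Nat.mod_eq_of_lt hr, Nat.mod_eq_of_lt he] at hmod
    simp only [Nat.mul_add_div hb, Nat.div_eq_of_lt hr, Nat.div_eq_of_lt he, add_zero] at hdiv
    exact ⟨hmod ▸ he_cases, T, hdiv⟩
  · rintro ⟨hr | rfl, S, rfl⟩
    · exact ⟨S.map (addRightEmbedding 1), by rw [Finset.sum_map_succ_mul_pow, hr, add_zero]⟩
    · refine ⟨insert 0 (S.map (addRightEmbedding 1)), ?_⟩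
      rw [Finset.sum_insert (by simp), Finset.sum_map_succ_mul_pow]
      ring

theorem mul_iff (hcb : c < b) (a : ℕ) :
    IsSumOfDistinctMulPow b c (b * a) ↔ IsSumOfDistinctMulPow b c a := by
  simpa using mul_add_iff hcb (r := 0) (by omega) a

theorem mul_add_self_iff (hcb : c < b) (a : ℕ) :
    IsSumOfDistinctMulPow b c (b * a + c) ↔ IsSumOfDistinctMulPow b c a := by
  simpa using mul_add_iff hcb hcb a

theorem not_mul_add (hcb : c < b) {r : ℕ} (hr0 : r ≠ 0) (hrc : r ≠ c) (hr : r < b) (a : ℕ) :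
    ¬IsSumOfDistinctMulPow b c (b * a + r) := by
  rw [mul_add_iff hcb hr]
  tauto

theorem not_and_succ (hc : 2 ≤ c) (hcb : c < b) (n : ℕ) :
    ¬(IsSumOfDistinctMulPow b c n ∧ IsSumOfDistinctMulPow b c (n + 1)) := by
  induction n using Nat.strong_induction_on with
  | _ n ih =>
  obtain ⟨q, r, hr, rfl⟩ : ∃ q r, r < b ∧ n = b * q + r :=
    ⟨n / b, n % b, Nat.mod_lt _ (by omega), (Nat.div_add_mod n b).symm⟩
  rintro ⟨hn, hsucc⟩
  obtain rfl | hrc := ((mul_add_iff hcb hr q).1 hn).1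
  · exact not_mul_add hcb one_ne_zero (by omega) (by omega) q hsucc
  · subst r
    rcases (show c + 1 < b ∨ c + 1 = b by omega) with hlt | rfl
    · exact not_mul_add hcb (by omega) (by omega) hlt q (by rwa [add_assoc] at hsucc)
    · rw [show (c + 1) * q + c + 1 = (c + 1) * (q + 1) by ring, mul_iff hcb] at hsucc
      exact ih q (by nlinarith) ⟨(mul_add_self_iff hcb q).1 hn, hsucc⟩

end IsSumOfDistinctMulPow

section sfm

variable {m : ℕ}

theorem sfm_mul_of_pos (hm : 2 ≤ m) {a : ℕ} (ha : 0 < a) : sfm m (m * a) = sfm m a := by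
  obtain ⟨k, hk⟩ := Nat.exists_eq_add_one_of_ne_zero (Nat.mul_pos (by omega : 0 < m) ha).ne'
  rw [hk, sfm, if_neg (by omega), if_pos (by rw [← hk, Nat.mul_mod_right]), ← hk,
    Nat.mul_div_cancel_left a (by omega)]

theorem sfm_of_lt (hm : 2 ≤ m) {r : ℕ} (hr : r < m) : sfm m r = 1 := by
  cases r with
  | zero => rw [sfm]
  | succ r =>
    rw [sfm, if_neg (by omega), Nat.mod_eq_of_lt hr, if_neg (by omega), if_pos hr, Nat.sub_self,
      sfm]

theorem sfm_mul_add (hm : 2 ≤ m) {r : ℕ} (hr0 : 0 < r) (hr : r < m) (b : ℕ) :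
    sfm m (m * (b + 1) + r) = sfm m (m * (b + 1)) + sfm m (m * b + r) := by
  obtain ⟨k, hk⟩ := Nat.exists_eq_add_one_of_ne_zero (show m * (b + 1) + r ≠ 0 by omega)
  have hmod : (m * (b + 1) + r) % m = r := by rw [Nat.mul_add_mod, Nat.mod_eq_of_lt hr]
  rw [hk, sfm, if_neg (by omega), ← hk, hmod, if_neg (by omega), if_neg (by nlinarith),
    Nat.add_sub_cancel, show m * (b + 1) + r - m = m * b + r by rw [mul_add_one]; omega]

end sfm

namespace IsSumOfDistinctMulPow

theorem three_two_mul_iff (a : ℕ) :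
    IsSumOfDistinctMulPow 3 2 (3 * a) ↔ IsSumOfDistinctMulPow 3 2 a :=
  mul_iff (by norm_num) a

theorem three_two_mul_add_two_iff (a : ℕ) :
    IsSumOfDistinctMulPow 3 2 (3 * a + 2) ↔ IsSumOfDistinctMulPow 3 2 a :=
  mul_add_self_iff (by norm_num) a

theorem not_three_two_mul_add_one (a : ℕ) : ¬IsSumOfDistinctMulPow 3 2 (3 * a + 1) :=
  not_mul_add (by norm_num) one_ne_zero (by norm_num) (by norm_num) a

theorem three_two_not_and_succ (n : ℕ) :
    ¬(IsSumOfDistinctMulPow 3 2 n ∧ IsSumOfDistinctMulPow 3 2 (n + 1)) :=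
  not_and_succ le_rfl (by norm_num) n

end IsSumOfDistinctMulPow

open IsSumOfDistinctMulPow in
theorem odd_sfm_three_succ_iff (n : ℕ) :
    Odd (sfm 3 (n + 1)) ↔ IsSumOfDistinctMulPow 3 2 (n + 1) ∨ IsSumOfDistinctMulPow 3 2 n := by
  induction n using Nat.strong_induction_on with
  | _ n ih =>
  have hmul (q : ℕ) (hq : 3 * q + 2 < n) :
      Odd (sfm 3 (3 * (q + 1))) ↔
        IsSumOfDistinctMulPow 3 2 (q + 1) ∨ IsSumOfDistinctMulPow 3 2 q := by
    have := ih _ hq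
    rwa [show 3 * q + 2 + 1 = 3 * (q + 1) by ring, three_two_mul_iff, three_two_mul_add_two_iff]
      at this
  obtain ⟨q, rfl | rfl | rfl⟩ : ∃ q, n = 3 * q ∨ n = 3 * q + 1 ∨ n = 3 * q + 2 :=
    ⟨n / 3, by omega⟩
  · rcases q with _ | q
    · exact iff_of_true (by rw [sfm_of_lt (by norm_num) (by norm_num)]; exact odd_one)
        (Or.inr zero)
    have hlow : Odd (sfm 3 (3 * q + 1)) ↔ IsSumOfDistinctMulPow 3 2 q := by
      simpa [not_three_two_mul_add_one, three_two_mul_iff] using ih (3 * q) (by omega)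
    rw [sfm_mul_add (by norm_num) one_pos (by norm_num), Nat.odd_add, hmul q (by omega),
      ← Nat.not_odd_iff_even, hlow, three_two_mul_iff]
    simp only [not_three_two_mul_add_one, false_or]
    have := three_two_not_and_succ q
    tauto
  · rcases q with _ | q
    · exact iff_of_true (by rw [sfm_of_lt (by norm_num) (by norm_num)]; exact odd_one)
        (Or.inl ((three_two_mul_add_two_iff 0).2 zero))
    have hlow : Odd (sfm 3 (3 * q + 2)) ↔ IsSumOfDistinctMulPow 3 2 q := by
      simpa [not_three_two_mul_add_one, three_two_mul_add_two_iff] using ih (3 * q + 1) (by omega)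
    rw [show 3 * (q + 1) + 1 + 1 = 3 * (q + 1) + 2 by ring, sfm_mul_add (by norm_num) two_pos
      (by norm_num), Nat.odd_add, hmul q (by omega), ← Nat.not_odd_iff_even, hlow,
      three_two_mul_add_two_iff]
    simp only [not_three_two_mul_add_one, or_false]
    have := three_two_not_and_succ q
    tauto
  · rw [show 3 * q + 2 + 1 = 3 * (q + 1) by ring, sfm_mul_of_pos (by norm_num) q.succ_pos,
      ih q (by omega), three_two_mul_iff, three_two_mul_add_two_iff]

/-- Σ_{r=0}^{n} sf(r,3) is odd if and only if `n` is a sum of distinct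
integers of the form `2 * 3 ^ k` (equivalently, as formal power series over
ℤ/2ℤ, `Σ_{n≥0} (Σ_{r=0}^{n} sf(r,3)) q^n = Π_{n≥0} (1 + q^{2·3^n})`). -/
theorem sfm_three_partial_sum_odd_iff (n : ℕ) :
    Odd (∑ r ∈ Finset.range (n + 1), sfm 3 r) ↔
      ∃ S : Finset ℕ, n = ∑ k ∈ S, 2 * 3 ^ k := by
  change _ ↔ IsSumOfDistinctMulPow 3 2 n
  induction n with
  | zero => simpa [sfm_of_lt] using IsSumOfDistinctMulPow.zero
  | succ n ih =>
    rw [Finset.sum_range_succ, Nat.odd_add, ih, ← Nat.not_odd_iff_even, odd_sfm_three_succ_iff]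
    have := IsSumOfDistinctMulPow.three_two_not_and_succ n
    tauto
end
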